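/- Let G be a nontrivial gyrogroup, let Ǧ = G \ {e}, and let GYR(Ǧ) = {γ|_Ǧ : γ ∈ GYR(G)} (well-defined since every element of GYR(G) fixes e). If the geometry (Ǧ, GYR(Ǧ)) is not transitive, then the geometry (G, Γ_m) is not n-transitive for all n ≥ 2. -/

import Mathlib

/-- A gyrogroup: a set with a binary operation `op`, a left identity `e`, left inverses
`inv`, and gyroautomorphisms `gyr a b` (bijective and operation-preserving) satisfying the
left gyroassociative law and the left loop property. -/
class Gyrogroup (G : Type*) where
  /-- the gyrogroup operation `⊕` -/
  op : G → G → G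
  /-- the identity element -/
  e : G
  /-- the inverse `⊖a` -/
  inv : G → G
  /-- (G1) `e ⊕ a = a` -/
  op_e : ∀ a : G, op e a = a
  /-- (G2) `⊖a ⊕ a = e` -/
  op_inv : ∀ a : G, op (inv a) a = e
  /-- the gyroautomorphism `gyr[a, b]` -/
  gyr : G → G → G → G
  /-- (G3) `gyr[a, b]` is bijective -/
  gyr_bijective : ∀ a b : G, Function.Bijective (gyr a b)
  /-- (G3) `gyr[a, b]` preserves the operation -/
  gyr_op : ∀ a b x y : G, gyr a b (op x y) = op (gyr a b x) (gyr a b y)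
  /-- (G3) the left gyroassociative law -/
  gyrassoc : ∀ a b c : G, op a (op b c) = op (op a b) (gyr a b c)
  /-- (G4) the left loop property -/
  loop : ∀ a b : G, gyr (op a b) b = gyr a b

namespace Gyrogroup

variable {G : Type*} [Gyrogroup G]

theorem key (x z : G) : op (inv x) (op x z) = gyr (inv x) x z := by
  rw [gyrassoc, op_inv, op_e]

theorem L_injective (x : G) : Function.Injective (op x) := by
  intro z₁ z₂ h
  have h1 : gyr (inv x) x z₁ = gyr (inv x) x z₂ := by
    rw [← key, ← key, h]
  exact (gyr_bijective (inv x) x).1 h1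

theorem L_surjective (x : G) : Function.Surjective (op x) := by
  intro w
  obtain ⟨z, hz⟩ := (gyr_bijective (inv x) x).2 (op (inv x) w)
  exact ⟨z, L_injective (inv x) (by rw [key, hz])⟩

theorem L_bijective (x : G) : Function.Bijective (op x) :=
  ⟨L_injective x, L_surjective x⟩

/-- The left gyrotranslation `L_a : x ↦ a ⊕ x` as a permutation of `G`. -/
noncomputable def Lperm (a : G) : Equiv.Perm G := Equiv.ofBijective (op a) (L_bijective a)

/-- The gyroautomorphism `gyr[a, b]` as a permutation of `G`. -/
noncomputable def gyrPerm (a b : G) : Equiv.Perm G := Equiv.ofBijective (gyr a b) (gyr_bijective a b)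

/-- `GYR(G)`: the subgroup of `Sym(G)` generated by all gyroautomorphisms. -/
def GYR (G : Type*) [Gyrogroup G] : Subgroup (Equiv.Perm G) :=
  Subgroup.closure {π : Equiv.Perm G | ∃ a b : G, π = gyrPerm a b}

/-- `Γₘ = {L_a ∘ γ : a ∈ G, γ ∈ GYR(G)}`, a subgroup of `Sym(G)`. -/
def Γm (G : Type*) [Gyrogroup G] : Set (Equiv.Perm G) :=
  {T : Equiv.Perm G | ∃ a : G, ∃ γ ∈ GYR G, T = Lperm a * γ}

end Gyrogroup

/-- The geometry `(S, 𝒯)` is `n`-transitive: `S` has at least `n` distinct elements, and any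
`n` pairwise distinct points can be mapped to any `n` pairwise distinct points by a single
transformation of `𝒯`. -/
def IsNTransitive {S : Type*} (𝒯 : Set (Equiv.Perm S)) (n : ℕ) : Prop :=
  (∃ x : Fin n → S, Function.Injective x) ∧
    ∀ x y : Fin n → S, Function.Injective x → Function.Injective y →
      ∃ t ∈ 𝒯, ∀ i, t (x i) = y i

/-! Every element of `GYR(G)` fixes `e`, and a map `L_c ∘ γ` of `Γₘ` fixing `e` has
`c = c ⊕ e = e`, so the stabiliser of `e` in `Γₘ` is `GYR(G)`. A `2`-transitive `Γₘ` would send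
`(e, x)` to `(e, y)` for any `x, y ≠ e`, hence some `γ ∈ GYR(G)` would send `x` to `y`. -/

theorem Function.Injective.exists_injective_eq_pair {ι S : Type*} {u : ι → S}
    (hu : Function.Injective u) {i j : ι} (hij : i ≠ j) {v w : S} (hvw : v ≠ w) :
    ∃ a : ι → S, Function.Injective a ∧ a i = v ∧ a j = w := by
  obtain ⟨σ, hσi, hσj⟩ := MulAction.is_two_pretransitive_iff.1
    (Equiv.Perm.isMultiplyPretransitive S 2) (hu.ne hij) hvw
  exact ⟨σ ∘ u, σ.injective.comp hu, hσi, hσj⟩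

theorem IsNTransitive.exists_apply_eq_pair {S : Type*} {𝒯 : Set (Equiv.Perm S)} {n : ℕ}
    (h : IsNTransitive 𝒯 n) (hn : 2 ≤ n) {v w v' w' : S} (hvw : v ≠ w) (hvw' : v' ≠ w') :
    ∃ t ∈ 𝒯, t v = v' ∧ t w = w' := by
  obtain ⟨⟨u, hu⟩, htrans⟩ := h
  have h01 : (⟨0, by omega⟩ : Fin n) ≠ ⟨1, by omega⟩ := by simp
  obtain ⟨a, ha, ha0, ha1⟩ := hu.exists_injective_eq_pair h01 hvw
  obtain ⟨b, hb, hb0, hb1⟩ := hu.exists_injective_eq_pair h01 hvw'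
  obtain ⟨t, ht, htab⟩ := htrans a b ha hb
  exact ⟨t, ht, by rw [← ha0, htab, hb0], by rw [← ha1, htab, hb1]⟩

namespace Gyrogroup

variable {G : Type*} [Gyrogroup G]

theorem gyr_e_left (b c : G) : gyr e b c = c := by
  apply L_injective b
  simpa only [op_e] using (gyrassoc e b c).symm

theorem gyr_apply_e (a b : G) : gyr a b e = e := by
  set u := gyr a b e
  -- `u` is idempotent, and `⊖u ⊕ (u ⊕ u) = gyr[⊖u, u] u = gyr[e, u] u = u` by the loop property.
  have huu : op u u = u := (gyr_op a b e e).symm.trans (by rw [op_e])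
  have h : gyr (inv u) u u = e := by rw [← key, huu, op_inv]
  rwa [← loop, op_inv, gyr_e_left] at h

theorem op_e_right (a : G) : op a e = a := by
  apply L_injective (inv a)
  rw [gyrassoc, gyr_apply_e, op_inv, op_e]

theorem Lperm_e : Lperm (e : G) = 1 :=
  Equiv.ext op_e

theorem GYR_le_stabilizer : GYR G ≤ MulAction.stabilizer (Equiv.Perm G) (e : G) :=
  Subgroup.closure_le _ |>.2 fun _ ⟨a, b, hπ⟩ => hπ ▸ gyr_apply_e a b

theorem mem_GYR_of_mem_Γm_of_apply_e {T : Equiv.Perm G} (hT : T ∈ Γm G) (hTe : T e = e) :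
    T ∈ GYR G := by
  obtain ⟨c, γ, hγ, rfl⟩ := hT
  have hγe : γ e = e := GYR_le_stabilizer hγ
  have hc : c = e := by
    simpa only [Equiv.Perm.mul_apply, hγe, Lperm, Equiv.ofBijective_apply, op_e_right] using hTe
  rwa [hc, Lperm_e, one_mul]

end Gyrogroup

open Gyrogroup in
theorem stmt12_general {G : Type*} [Gyrogroup G]
    (h : ¬ ∀ x y : G, x ≠ e → y ≠ e → ∃ γ ∈ GYR G, γ x = y) :
    ∀ n : ℕ, 2 ≤ n → ¬ IsNTransitive (Γm G) n := by
  push Not at h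
  obtain ⟨x, y, hx, hy, hxy⟩ := h
  intro n hn htrans
  obtain ⟨T, hT, hTe, hTx⟩ := htrans.exists_apply_eq_pair hn hx.symm hy.symm
  exact hxy T (mem_GYR_of_mem_Γm_of_apply_e hT hTe) hTx

open Gyrogroup in
/-- Let `G` be a nontrivial gyrogroup and let `Ǧ = G \ {e}`. If the geometry
`(Ǧ, GYR(Ǧ))` of restrictions of elements of `GYR(G)` is not transitive, then `(G, Γₘ)` is
not `n`-transitive for any `n ≥ 2`. -/
theorem stmt12 {G : Type*} [Gyrogroup G] (hnt : ∃ x : G, x ≠ e)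
    (h : ¬ ∀ x y : G, x ≠ e → y ≠ e → ∃ γ ∈ GYR G, γ x = y) :
    ∀ n : ℕ, 2 ≤ n → ¬ IsNTransitive (Γm G) n :=
  stmt12_general h
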